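/- arXiv:2406.12279 — 6 statements merged into one kernel-verified Lean document; each statement's English description precedes it below -/
import Mathlib

section
/- The union U∪V with U={θ√q−t² : θ∈(0,2]} and V={2√q−αt² : α∈(0,1]} is rich: for any diagonal bundles (t,q)<(t',q') (i.e. t<t', q<q'), if there is no θ∈(0,2] with θ√q−t² = θ√q'−t'², then there exists α∈(0,1] with 2√q−αt² = 2√q'−αt'². Concretely, if (t'²−t²)/(√q'−√q) > 2 is false then θ=(t'²−t²)/(√q'−√q) works; otherwise α=2(√q'−√q)/(t'²−t²) ≤ 1 works. -/
/-- The union U∪V (U={θ√q−t² : θ∈(0,2]}, V={2√q−αt² : α∈(0,1]}) is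
rich: for diagonal bundles (t,q)<(t',q'), if no θ∈(0,2] makes them indifferent
within U, then some α∈(0,1] makes them indifferent within V. -/
theorem two_parameter_rich
    (t q t' q' : ℝ)
    (ht0 : 0 ≤ t) (htt : t < t')
    (hq0 : 0 ≤ q) (hqq : q < q') (hq1 : q' ≤ 1)
    (hU : ¬ ∃ θ : ℝ, 0 < θ ∧ θ ≤ 2 ∧
        θ * Real.sqrt q - t ^ 2 = θ * Real.sqrt q' - t' ^ 2) :
    ∃ α : ℝ, 0 < α ∧ α ≤ 1 ∧
      2 * Real.sqrt q - α * t ^ 2 = 2 * Real.sqrt q' - α * t' ^ 2 := by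
  have hS : 0 < Real.sqrt q' - Real.sqrt q := by
    have := Real.sqrt_lt_sqrt hq0 hqq
    linarith
  have hD : 0 < t' ^ 2 - t ^ 2 := by nlinarith
  set S := Real.sqrt q' - Real.sqrt q with hSdef
  set D := t' ^ 2 - t ^ 2 with hDdef
  have hDS : 2 * S < D := by
    by_contra h
    push_neg at h
    exact hU ⟨D / S, by positivity, by
      rw [div_le_iff₀ hS]; linarith, by
      have : D / S * S = D := div_mul_cancel₀ D hS.ne'
      nlinarith [this]⟩
  refine ⟨2 * S / D, by positivity, by rw [div_le_one hD]; linarith, ?_⟩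
  have : 2 * S / D * D = 2 * S := div_mul_cancel₀ _ hD.ne'
  nlinarith [this]
end

section
/- Every strategy-proof mechanism on a rich single-crossing domain is monotone: if F(R')RʹF(R'') and F(R'')R''F(R') for all reports (strategy-proofness), and R'≺R'' in the cutting-from-above order, then F(R') ≤ F(R'') componentwise (t(R')≤t(R'') and q(R')≤q(R'')). -/
/-- Membership in the bundle space Z = [0,∞) × [0,1]. -/
def inZ (z : ℝ × ℝ) : Prop := 0 ≤ z.1 ∧ 0 ≤ z.2 ∧ z.2 ≤ 1

/-- The paper's order on bundles: x ≤ z iff x = z or both coordinates strictly increase. -/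
def bLe (x z : ℝ × ℝ) : Prop := x = z ∨ (x.1 < z.1 ∧ x.2 < z.2)

/-- Diagonal bundles: both coordinates strictly increase. -/
def bLt (x z : ℝ × ℝ) : Prop := x.1 < z.1 ∧ x.2 < z.2

/-- A classical preference on Z = [0,∞) × [0,1]: a complete transitive relation,
strictly decreasing in the payment t, strictly increasing in the share q, and
continuous (closed upper and lower contour sets within Z). -/
structure ClassicalPref where
  R : ℝ × ℝ → ℝ × ℝ → Prop
  total : ∀ x y, inZ x → inZ y → R x y ∨ R y x
  transitive : ∀ x y z, R x y → R y z → R x z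
  money_mono : ∀ t' t'' q : ℝ, 0 ≤ t' → t' < t'' → 0 ≤ q → q ≤ 1 →
    R (t', q) (t'', q) ∧ ¬ R (t'', q) (t', q)
  q_mono : ∀ t q' q'' : ℝ, 0 ≤ t → 0 ≤ q' → q' < q'' → q'' ≤ 1 →
    R (t, q'') (t, q') ∧ ¬ R (t, q') (t, q'')
  continuous : ∀ z, IsClosed {w | inZ w ∧ R w z} ∧ IsClosed {w | inZ w ∧ R z w}

/-- Strict preference. -/
def SPref (A : ClassicalPref) (x y : ℝ × ℝ) : Prop := A.R x y ∧ ¬ A.R y x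

/-- Indifference. -/
def Indiff (A : ClassicalPref) (x y : ℝ × ℝ) : Prop := A.R x y ∧ A.R y x

/-- Two classical preferences single-cross: indifference curves of the two
preferences meet in at most one bundle. -/
def SingleCrossing (A B : ClassicalPref) : Prop :=
  ∀ x y z, inZ x → inZ y → inZ z → Indiff A z x → Indiff B z y →
    ∀ w, inZ w → Indiff A w x → Indiff B w y → w = z

/-- Richness: any diagonal pair of bundles is indifferent under some member. -/
def RichDom (D : Set ClassicalPref) : Prop :=
  ∀ x y, inZ x → inZ y → bLt x y → ∃ A ∈ D, Indiff A x y

/-- A rich single-crossing domain. -/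
def RichSC (D : Set ClassicalPref) : Prop :=
  (∀ A ∈ D, ∀ B ∈ D, A ≠ B → SingleCrossing A B) ∧ RichDom D

/-- B cuts A from above: at every bundle z, the part of B's upper contour set
through z lying in the box below z is contained in that of A. -/
def CutsAbove (B A : ClassicalPref) : Prop :=
  ∀ z, inZ z → ∀ w, inZ w → bLe w z → B.R w z → A.R w z

/-- The order on a single-crossing domain: A ≺ B iff B cuts A from above. -/
def Prec (A B : ClassicalPref) : Prop := CutsAbove B A

/-- Weak version of the order. -/
def PrecSim (A B : ClassicalPref) : Prop := A = B ∨ Prec A B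

/-- Convergence of a sequence of preferences to R in the order topology on the
domain D: the sequence is eventually inside every open order interval around R. -/
def OrdConv (D : Set ClassicalPref) (seq : ℕ → ClassicalPref) (R : ClassicalPref) : Prop :=
  ∀ A ∈ D, ∀ B ∈ D, Prec A R → Prec R B →
    ∃ N, ∀ n ≥ N, Prec A (seq n) ∧ Prec (seq n) B

/-- A monotone (increasing or decreasing) sequence of preferences. -/
def MonoSeq (seq : ℕ → ClassicalPref) : Prop :=
  (∀ n, PrecSim (seq n) (seq (n + 1))) ∨ (∀ n, PrecSim (seq (n + 1)) (seq n))

/-- Every strategy-proof mechanism on a rich single-crossing domain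
is monotone: if R' ≺ R'' then F(R') ≤ F(R'') componentwise. -/
theorem strategyproof_implies_monotone
    (D : Set ClassicalPref) (hD : RichSC D)
    (F : ClassicalPref → ℝ × ℝ)
    (hFZ : ∀ A ∈ D, inZ (F A))
    (hSP : ∀ A ∈ D, ∀ B ∈ D, A.R (F A) (F B)) :
    ∀ A ∈ D, ∀ B ∈ D, Prec A B →
      (F A).1 ≤ (F B).1 ∧ (F A).2 ≤ (F B).2 := by
  intro A hA B hB hprec
  obtain ⟨hx1, hx2, hx3⟩ := hFZ A hA
  obtain ⟨hz1, hz2, hz3⟩ := hFZ B hB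
  have hxZ : inZ (F A) := ⟨hx1, hx2, hx3⟩
  have hzZ : inZ (F B) := ⟨hz1, hz2, hz3⟩
  have hAxz : A.R (F A) (F B) := hSP A hA B hB
  have hBzx : B.R (F B) (F A) := hSP B hB A hA
  -- The diagonal case F B < F A (both coordinates) is impossible.
  have hdiag : ¬ ((F B).1 < (F A).1 ∧ (F B).2 < (F A).2) := by
    rintro ⟨h1, h2⟩
    have hne : A ≠ B := by
      rintro rfl; exact lt_irrefl _ h1
    -- find a point m = (t0, (F B).2) with Indiff B m (F A) via IVT on a horizontal segment
    have hcont := B.continuous (F A)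
    have hmap : Continuous (fun t : ℝ => ((t, (F B).2) : ℝ × ℝ)) :=
      continuous_id.prodMk continuous_const
    have hUc : IsClosed ((fun t : ℝ => ((t, (F B).2) : ℝ × ℝ)) ⁻¹'
        {w | inZ w ∧ B.R w (F A)}) := hcont.1.preimage hmap
    have hLc : IsClosed ((fun t : ℝ => ((t, (F B).2) : ℝ × ℝ)) ⁻¹'
        {w | inZ w ∧ B.R (F A) w}) := hcont.2.preimage hmap
    have hcover : Set.Icc (F B).1 (F A).1 ⊆
        ((fun t : ℝ => ((t, (F B).2) : ℝ × ℝ)) ⁻¹' {w | inZ w ∧ B.R w (F A)}) ∪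
        ((fun t : ℝ => ((t, (F B).2) : ℝ × ℝ)) ⁻¹' {w | inZ w ∧ B.R (F A) w}) := by
      intro t ht
      have hin : inZ (t, (F B).2) := ⟨le_trans hz1 ht.1, hz2, hz3⟩
      rcases B.total (t, (F B).2) (F A) hin hxZ with h | h
      · exact Or.inl ⟨hin, h⟩
      · exact Or.inr ⟨hin, h⟩
    have hUne : (Set.Icc (F B).1 (F A).1 ∩
        ((fun t : ℝ => ((t, (F B).2) : ℝ × ℝ)) ⁻¹' {w | inZ w ∧ B.R w (F A)})).Nonempty := by
      refine ⟨(F B).1, ⟨le_refl _, le_of_lt h1⟩, ⟨hzZ, ?_⟩⟩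
      exact hBzx
    have hLne : (Set.Icc (F B).1 (F A).1 ∩
        ((fun t : ℝ => ((t, (F B).2) : ℝ × ℝ)) ⁻¹' {w | inZ w ∧ B.R (F A) w})).Nonempty := by
      refine ⟨(F A).1, ⟨le_of_lt h1, le_refl _⟩, ⟨⟨hx1, hz2, hz3⟩, ?_⟩⟩
      exact (B.q_mono (F A).1 (F B).2 (F A).2 hx1 hz2 h2 hx3).1
    obtain ⟨t0, ht0I, ht0U, ht0L⟩ :=
      isPreconnected_closed_iff.mp isPreconnected_Icc _ _ hUc hLc hcover hUne hLne
    obtain ⟨hmZ, hBmx⟩ := ht0U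
    obtain ⟨_, hBxm⟩ := ht0L
    -- t0 < (F A).1 since (F A).1 is strictly below the curve
    have ht0lt : t0 < (F A).1 := by
      rcases lt_or_eq_of_le ht0I.2 with h | h
      · exact h
      · exfalso
        have := (B.q_mono (F A).1 (F B).2 (F A).2 hx1 hz2 h2 hx3).2
        rw [h] at hBmx
        exact this hBmx
    -- by cutting from above, A.R m (F A)
    have hAmx : A.R (t0, (F B).2) (F A) :=
      hprec (F A) hxZ (t0, (F B).2) hmZ (Or.inr ⟨ht0lt, h2⟩) hBmx
    -- A.R (F A) m via F B
    have hAzm : A.R (F B) (t0, (F B).2) := by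
      rcases lt_or_eq_of_le ht0I.1 with h | h
      · exact (A.money_mono (F B).1 t0 (F B).2 hz1 h hz2 hz3).1
      · rw [← h]
        exact (A.total (F B) (F B) hzZ hzZ).elim id id
    have hAxm : A.R (F A) (t0, (F B).2) := A.transitive _ _ _ hAxz hAzm
    -- single crossing: the A- and B-curves through F A meet at both F A and m
    have hrfl : ∀ (C : ClassicalPref), C.R (F A) (F A) :=
      fun C => (C.total (F A) (F A) hxZ hxZ).elim id id
    have hsc := hD.1 A hA B hB hne (F A) (F A) (t0, (F B).2) hxZ hxZ hmZ
      ⟨hAmx, hAxm⟩ ⟨hBmx, hBxm⟩ (F A) hxZ ⟨hrfl A, hrfl A⟩ ⟨hrfl B, hrfl B⟩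
    have h22 := congrArg Prod.snd hsc
    exact (ne_of_lt h2) h22.symm
  constructor
  · by_contra hcon
    push_neg at hcon
    rcases le_or_gt (F A).2 (F B).2 with hq | hq
    · -- F B is strictly cheaper and weakly better: A strictly prefers F B, contradiction
      have hmoney := A.money_mono (F B).1 (F A).1 (F A).2 hz1 hcon hx2 hx3
      rcases lt_or_eq_of_le hq with h | h
      · have hq' : A.R (F B) ((F B).1, (F A).2) :=
          (A.q_mono (F B).1 (F A).2 (F B).2 hz1 hx2 h hz3).1
        exact hmoney.2 (A.transitive _ _ _ hAxz hq')
      · have hFB : F B = ((F B).1, (F A).2) := by rw [h]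
        exact hmoney.2 (by rw [← hFB]; exact hAxz)
    · exact hdiag ⟨hcon, hq⟩
  · by_contra hcon
    push_neg at hcon
    have hle : (F A).1 ≤ (F B).1 := by
      by_contra h
      push_neg at h
      exact hdiag ⟨h, hcon⟩
    -- F A is weakly cheaper and strictly better share: B strictly prefers F A, contradiction
    have hqm := B.q_mono (F B).1 (F B).2 (F A).2 hz1 hz2 hcon hx3
    rcases lt_or_eq_of_le hle with h | h
    · have hmoney := B.money_mono (F A).1 (F B).1 (F A).2 hx1 h hx2 hx3
      have : B.R (F B) ((F B).1, (F A).2) := B.transitive _ _ _ hBzx hmoney.1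
      exact hqm.2 this
    · have hFA : F A = ((F B).1, (F A).2) := by rw [← h]
      exact hqm.2 (by rw [← hFA]; exact hBzx)
end

section
/- Independence of axioms, part 1: for the quasilinear domain {θq−t : θ>0}, fix 0<θ̲<θ̄ and set t¹=θ̲, t²=θ̄. The mechanism F(θ)=(t²,1) if θ≥θ̄, F(θ)=(0,0) if θ̲<θ<θ̄, and F(θ)=(t¹,1) if θ<θ̲, has a continuous indirect utility V^F(θ)=θ−t² for θ≥θ̄, 0 for θ̲<θ<θ̄, θ−t¹ for θ≤θ̲, but F is not monotone (and hence not strategy-proof). -/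
/-- Independence of axioms, part 1. For the quasilinear domain
{θq−t : θ>0}, with 0<θ̲<θ̄, t¹=θ̲, t²=θ̄, the mechanism F(θ)=(t²,1) for θ≥θ̄,
(0,0) for θ̲<θ<θ̄, (t¹,1) for θ≤θ̲ has continuous indirect utility
V(θ)=θq(θ)−t(θ), with the stated piecewise values, but F is not monotone. -/
theorem continuous_V_not_monotone
    (θlo θhi : ℝ) (h0 : 0 < θlo) (hlt : θlo < θhi)
    (F : ℝ → ℝ × ℝ)
    (hF : ∀ θ, F θ = if θhi ≤ θ then (θhi, 1)
                     else if θlo < θ then (0, 0) else (θlo, 1))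
    (V : ℝ → ℝ) (hV : ∀ θ, V θ = θ * (F θ).2 - (F θ).1) :
    (∀ θ, θhi ≤ θ → V θ = θ - θhi) ∧
    (∀ θ, θlo < θ → θ < θhi → V θ = 0) ∧
    (∀ θ, θ ≤ θlo → V θ = θ - θlo) ∧
    ContinuousOn V (Set.Ioi 0) ∧
    ¬ (∀ θ' θ'', 0 < θ' → θ' < θ'' →
        (F θ').1 ≤ (F θ'').1 ∧ (F θ').2 ≤ (F θ'').2) := by
  have hVval : ∀ θ, V θ = max 0 (θ - θhi) + min 0 (θ - θlo) := by
    intro θ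
    rw [hV θ, hF θ]
    rcases le_or_gt θhi θ with h1 | h1
    · simp only [if_pos h1]
      have h2 : θlo ≤ θ := le_trans hlt.le h1
      rw [max_eq_right (by linarith), min_eq_left (by linarith)]
      ring
    · rw [if_neg (not_le.mpr h1)]
      rcases lt_or_ge θlo θ with h2 | h2
      · rw [if_pos h2, max_eq_left (by linarith), min_eq_left (by linarith)]
        ring
      · rw [if_neg (not_lt.mpr h2), max_eq_left (by linarith),
          min_eq_right (by linarith)]
        ring
  refine ⟨?_, ?_, ?_, ?_, ?_⟩
  · intro θ h1
    rw [hVval θ, max_eq_right (by linarith), min_eq_left (by linarith)]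
    ring
  · intro θ h2 h1
    rw [hVval θ, max_eq_left (by linarith), min_eq_left (by linarith)]
    ring
  · intro θ h2
    rw [hVval θ, max_eq_left (by linarith), min_eq_right (by linarith)]
    ring
  · have : Continuous V := by
      have : V = fun θ => max 0 (θ - θhi) + min 0 (θ - θlo) := funext hVval
      rw [this]
      fun_prop
    exact this.continuousOn
  · intro h
    have hmid : θlo < (θlo + θhi) / 2 := by linarith
    have hmid2 : (θlo + θhi) / 2 < θhi := by linarith
    have := (h θlo ((θlo + θhi) / 2) h0 hmid).2
    rw [hF θlo, hF ((θlo + θhi) / 2), if_neg (not_le.mpr hlt),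
      if_neg (not_lt.mpr le_rfl), if_neg (not_le.mpr hmid2), if_pos hmid] at this
    norm_num at this
end

section
/- Independence of axioms, part 2: in the quasilinear domain {θq−t : θ>0}, let (t¹,q¹)<(t²,q²) (componentwise strict) and θ be defined by θq¹−t¹=θq²−t². For any θ*<θ, the mechanism F(θ')=(t¹,q¹) for θ'<θ* and F(θ')=(t²,q²) for θ'≥θ* is monotone, but its indirect utility function V^F(θ')=u(F(θ');θ') is not continuous at θ*: the left limit equals θ*q¹−t¹ which is strictly greater than θ*q²−t² = V^F(θ*). -/
/-- Independence of axioms, part 2. In the quasilinear domain, with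
(t¹,q¹)<(t²,q²), θ the indifference-defining type, and θ*<θ, the two-step
mechanism F is monotone but its indirect utility V is discontinuous at θ*: the
left limit θ*q¹−t¹ strictly exceeds V(θ*)=θ*q²−t². -/
theorem monotone_V_not_continuous
    (t1 q1 t2 q2 θ θs : ℝ)
    (ht1 : 0 ≤ t1) (htt : t1 < t2)
    (hq1 : 0 ≤ q1) (hqq : q1 < q2) (hq2 : q2 ≤ 1)
    (hθ : θ * q1 - t1 = θ * q2 - t2)
    (hθs : 0 < θs) (hlt : θs < θ)
    (F : ℝ → ℝ × ℝ)
    (hF : ∀ x, F x = if θs ≤ x then (t2, q2) else (t1, q1))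
    (V : ℝ → ℝ) (hV : ∀ x, V x = x * (F x).2 - (F x).1) :
    (∀ a b, a < b → (F a).1 ≤ (F b).1 ∧ (F a).2 ≤ (F b).2) ∧
    Filter.Tendsto V (nhdsWithin θs (Set.Iio θs)) (nhds (θs * q1 - t1)) ∧
    V θs = θs * q2 - t2 ∧
    θs * q2 - t2 < θs * q1 - t1 := by
    refine ⟨?_, ?_, ?_, ?_⟩
    · intro a b hab
      rw [hF a, hF b]
      by_cases ha : θs ≤ a
      · rw [if_pos ha, if_pos (ha.trans hab.le)]; exact ⟨le_rfl, le_rfl⟩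
      · rw [if_neg ha]
        by_cases hb : θs ≤ b
        · rw [if_pos hb]; exact ⟨htt.le, hqq.le⟩
        · rw [if_neg hb]; exact ⟨le_rfl, le_rfl⟩
    · have h : ∀ x ∈ Set.Iio θs, V x = x * q1 - t1 := by
        intro x hx
        rw [hV x, hF x, if_neg (not_le.mpr hx)]
      have hcont : Filter.Tendsto (fun x : ℝ => x * q1 - t1)
          (nhdsWithin θs (Set.Iio θs)) (nhds (θs * q1 - t1)) :=
        ((continuous_id.mul continuous_const).sub continuous_const).continuousAt.continuousWithinAt
      exact hcont.congr' (Filter.eventuallyEq_of_mem self_mem_nhdsWithin fun x hx => (h x hx).symm)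
    · rw [hV θs, hF θs, if_pos le_rfl]
    · nlinarith [mul_pos (sub_pos.mpr hlt) (sub_pos.mpr hqq)]
end

section
/- In a rich single-crossing domain of restricted classical preferences, the cut-from-above order agrees with the order of payment bounds: if R'' cuts R' from above, then t_{R'} < t_{R''}. -/
/-- A restricted classical preference, defined on [0,t_R]×[0,1] for a payment
bound t_R ∈ (0,∞): money-monotone for q>0, q-monotone for t<t_R, 0-equivalent
((0,0) I (t_R,q) for all q, and (0,0) I (t,0) for t<t_R) and continuous. -/
structure RestrictedPref where
  tR : ℝ
  tR_pos : 0 < tR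
  R : ℝ × ℝ → ℝ × ℝ → Prop
  total : ∀ x y : ℝ × ℝ,
    (0 ≤ x.1 ∧ x.1 ≤ tR ∧ 0 ≤ x.2 ∧ x.2 ≤ 1) →
    (0 ≤ y.1 ∧ y.1 ≤ tR ∧ 0 ≤ y.2 ∧ y.2 ≤ 1) → R x y ∨ R y x
  transitive : ∀ x y z, R x y → R y z → R x z
  money_mono : ∀ q : ℝ, 0 < q → q ≤ 1 → ∀ t' t'' : ℝ, 0 ≤ t' → t' < t'' → t'' ≤ tR →
    R (t', q) (t'', q) ∧ ¬ R (t'', q) (t', q)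
  q_mono : ∀ t : ℝ, 0 ≤ t → t < tR → ∀ q' q'' : ℝ, 0 ≤ q' → q' < q'' → q'' ≤ 1 →
    R (t, q'') (t, q') ∧ ¬ R (t, q') (t, q'')
  zero_equiv_bound : ∀ q : ℝ, 0 ≤ q → q ≤ 1 → R (0, 0) (tR, q) ∧ R (tR, q) (0, 0)
  zero_equiv_q : ∀ t : ℝ, 0 ≤ t → t < tR → R (0, 0) (t, 0) ∧ R (t, 0) (0, 0)
  continuous : ∀ z, IsClosed {w : ℝ × ℝ | (0 ≤ w.1 ∧ w.1 ≤ tR ∧ 0 ≤ w.2 ∧ w.2 ≤ 1) ∧ R w z} ∧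
    IsClosed {w : ℝ × ℝ | (0 ≤ w.1 ∧ w.1 ≤ tR ∧ 0 ≤ w.2 ∧ w.2 ≤ 1) ∧ R z w}

/-- Indifference for a restricted classical preference. -/
def RIndiff (A : RestrictedPref) (x y : ℝ × ℝ) : Prop := A.R x y ∧ A.R y x

/-- Two restricted classical preferences single-cross: for every bundle (t,q)
with q>0 and t < min{t_{R'},t_{R''}}, their indifference curves through (t,q)
meet only at (t,q). -/
def RSingleCrossing (A B : RestrictedPref) : Prop :=
  ∀ t q : ℝ, 0 < q → q ≤ 1 → 0 ≤ t → t < min A.tR B.tR →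
    ∀ w, inZ w → RIndiff A w (t, q) → RIndiff B w (t, q) → w = (t, q)

/-- B cuts A from above (restricted version). -/
def RCutsAbove (B A : RestrictedPref) : Prop :=
  ∀ t q : ℝ, 0 < q → q ≤ 1 → 0 ≤ t → t < min A.tR B.tR →
    ∀ w, inZ w → bLe w (t, q) → B.R w (t, q) → A.R w (t, q)

/-- A rich single-crossing domain of restricted classical preferences: distinct
members single-cross, and any diagonal pair of bundles is indifferent under some
member (whose payment bound accommodates the bundles). -/
def RRichSC (D : Set RestrictedPref) : Prop :=
  (∀ A ∈ D, ∀ B ∈ D, A ≠ B → RSingleCrossing A B) ∧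
  (∀ x y : ℝ × ℝ, inZ x → inZ y → bLt x y →
    ∃ A ∈ D, y.1 ≤ A.tR ∧ RIndiff A x y)

/-- In a rich single-crossing domain of restricted classical
preferences, the cut-from-above order agrees with the order of payment bounds:
if R'' cuts R' from above then t_{R'} < t_{R''}. -/
theorem cutsAbove_implies_bound_lt
    (D : Set RestrictedPref) (hD : RRichSC D)
    (A B : RestrictedPref) (hA : A ∈ D) (hB : B ∈ D)
    (hne : A.tR ≠ B.tR)
    (hcut : RCutsAbove B A) :
    A.tR < B.tR := by
  by_contra h
  have hTlt : B.tR < A.tR := lt_of_le_of_ne (not_lt.mp h) (Ne.symm hne)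
  set T := B.tR with hT
  have hT0 : 0 < T := B.tR_pos
  have hTA : T < A.tR := hTlt
  -- (T,1) strictly preferred to (0,0) under A
  have hq := A.q_mono T hT0.le hTA 0 1 le_rfl one_pos le_rfl
  have hz := A.zero_equiv_q T hT0.le hTA
  have hstrictA : ¬ A.R (0, 0) ((T : ℝ), 1) := fun hc =>
    hq.2 (A.transitive _ _ _ hz.2 hc)
  -- find ε ∈ (0,1) with ¬ A.R (0,ε) (T,1)
  have hS1 := (A.continuous ((T : ℝ), 1)).1
  have hmem00 : ((0 : ℝ), (0 : ℝ)) ∈ {w : ℝ × ℝ |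
      (0 ≤ w.1 ∧ w.1 ≤ A.tR ∧ 0 ≤ w.2 ∧ w.2 ≤ 1) ∧ A.R w ((T : ℝ), 1)}ᶜ := by
    intro hmem
    exact hstrictA hmem.2
  obtain ⟨δ1, hδ1, hball1⟩ := Metric.isOpen_iff.mp hS1.isOpen_compl _ hmem00
  set ε : ℝ := min (δ1 / 2) (1 / 2) with hε
  have hε0 : 0 < ε := lt_min (by linarith) (by norm_num)
  have hε1 : ε < 1 := lt_of_le_of_lt (min_le_right _ _) (by norm_num)
  have hεδ : ε < δ1 := lt_of_le_of_lt (min_le_left _ _) (by linarith)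
  have hεball : ((0 : ℝ), ε) ∈ Metric.ball ((0 : ℝ), (0 : ℝ)) δ1 := by
    rw [Metric.mem_ball, Prod.dist_eq]
    simp only [dist_self]
    rw [max_eq_right dist_nonneg, Real.dist_eq, sub_zero, abs_of_pos hε0]
    exact hεδ
  have hnAε : ¬ A.R ((0 : ℝ), ε) ((T : ℝ), 1) := by
    intro hc
    exact hball1 hεball ⟨⟨le_rfl, A.tR_pos.le, hε0.le, hε1.le⟩, hc⟩
  -- (0,ε) strictly preferred to (T,1) under B
  have hqB := B.q_mono 0 le_rfl B.tR_pos 0 ε le_rfl hε0 hε1.le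
  have hzB := B.zero_equiv_bound 1 zero_le_one le_rfl
  have hnB : ¬ B.R ((T : ℝ), 1) ((0 : ℝ), ε) := by
    intro hc
    exact hqB.2 (B.transitive _ _ _ hzB.1 hc)
  -- open neighborhoods around (T,1)
  have hS2 := (A.continuous ((0 : ℝ), ε)).2
  have hmemT1A : ((T : ℝ), (1 : ℝ)) ∈ {w : ℝ × ℝ |
      (0 ≤ w.1 ∧ w.1 ≤ A.tR ∧ 0 ≤ w.2 ∧ w.2 ≤ 1) ∧ A.R ((0 : ℝ), ε) w}ᶜ := by
    intro hmem
    exact hnAε hmem.2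
  obtain ⟨δ2, hδ2, hball2⟩ := Metric.isOpen_iff.mp hS2.isOpen_compl _ hmemT1A
  have hS3 := (B.continuous ((0 : ℝ), ε)).1
  have hmemT1B : ((T : ℝ), (1 : ℝ)) ∈ {w : ℝ × ℝ |
      (0 ≤ w.1 ∧ w.1 ≤ B.tR ∧ 0 ≤ w.2 ∧ w.2 ≤ 1) ∧ B.R w ((0 : ℝ), ε)}ᶜ := by
    intro hmem
    exact hnB hmem.2
  obtain ⟨δ3, hδ3, hball3⟩ := Metric.isOpen_iff.mp hS3.isOpen_compl _ hmemT1B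
  set d : ℝ := min (min δ2 δ3) T with hd
  have hd0 : 0 < d := lt_min (lt_min hδ2 hδ3) hT0
  set t : ℝ := T - d / 2 with ht
  have ht0 : 0 < t := by
    have : d ≤ T := min_le_right _ _
    simp only [ht]; linarith
  have htT : t < T := by simp only [ht]; linarith
  have hdist : dist ((t : ℝ), (1 : ℝ)) ((T : ℝ), (1 : ℝ)) = d / 2 := by
    rw [Prod.dist_eq]
    simp only [dist_self]
    rw [max_eq_left dist_nonneg, Real.dist_eq]
    have het : t - T = -(d / 2) := by rw [ht]; ring
    rw [het, abs_neg, abs_of_nonneg (by linarith)]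
  have hdδ2 : (d : ℝ) / 2 < δ2 := by
    have : d ≤ δ2 := le_trans (min_le_left _ _) (min_le_left _ _)
    linarith
  have hdδ3 : (d : ℝ) / 2 < δ3 := by
    have : d ≤ δ3 := le_trans (min_le_left _ _) (min_le_right _ _)
    linarith
  have hboxB : (0 ≤ t ∧ t ≤ B.tR ∧ (0:ℝ) ≤ 1 ∧ (1:ℝ) ≤ 1) :=
    ⟨ht0.le, htT.le, zero_le_one, le_rfl⟩
  have hboxA : (0 ≤ t ∧ t ≤ A.tR ∧ (0:ℝ) ≤ 1 ∧ (1:ℝ) ≤ 1) :=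
    ⟨ht0.le, le_of_lt (htT.trans hTA), zero_le_one, le_rfl⟩
  -- ¬ A.R (0,ε) (t,1)
  have hnAt : ¬ A.R ((0 : ℝ), ε) ((t : ℝ), 1) := by
    intro hc
    refine hball2 ?_ ⟨hboxA, hc⟩
    rw [Metric.mem_ball, hdist]; exact hdδ2
  -- ¬ B.R (t,1) (0,ε)
  have hnBt : ¬ B.R ((t : ℝ), 1) ((0 : ℝ), ε) := by
    intro hc
    refine hball3 ?_ ⟨hboxB, hc⟩
    rw [Metric.mem_ball, hdist]; exact hdδ3
  -- by totality of B, B.R (0,ε) (t,1)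
  have hBt : B.R ((0 : ℝ), ε) ((t : ℝ), 1) := by
    rcases B.total ((0 : ℝ), ε) ((t : ℝ), 1)
      ⟨le_rfl, B.tR_pos.le, hε0.le, hε1.le⟩ hboxB with h' | h'
    · exact h'
    · exact absurd h' hnBt
  -- apply the cut condition
  have hmin : t < min A.tR B.tR := by
    rw [min_eq_right hTlt.le]; exact htT
  have := hcut t 1 one_pos le_rfl ht0.le hmin ((0 : ℝ), ε)
    ⟨le_rfl, hε0.le, hε1.le⟩ (Or.inr ⟨ht0, hε1⟩) hBt
  exact hnAt this
end

section
/- Supremum/infimum at limit points of the range: let F be a strategy-proof, individually rational mechanism on an interval of a rich single-crossing domain, and let F(R') be a limit point of Rn(F). Define R* = sup{R : F(R)=F(R')}. If there exists a sequence Rⁿ with F(R') < F(Rⁿ⁺¹) < F(Rⁿ) and F(Rⁿ)↓F(R'), then F(R*) = F(R'). Symmetrically, with R** = inf{R: F(R)=F(R')} and an increasing sequence of range bundles converging up to F(R'), F(R**) = F(R'). -/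
/-!
Strategy-proofness says that `X` weakly prefers `F X` to `F Y` and `Y` weakly prefers `F Y` to
`F X`. When the two bundles are diagonally ordered, single crossing turns this disagreement into
an order between `X` and `Y`: `F X < F Y` gives `X ≼ Y`, and conversely `X ≼ Y` forces
`F X ≤ F Y`. If `F R' < F R*`, a range bundle `F Y` of the sequence lies strictly between them;
then `Y` is an upper bound of `{R | F R = F R'}`, so `R* ≼ Y` and `F R* ≤ F Y`, which is absurd.
The infimum is symmetric.

The topological core is that a single disagreement orders two single-crossing preferences. Say
`B` is steeper than `A` at `c` if `B` strictly prefers `c` to some cheaper, smaller bundle on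
`A`'s indifference curve through `c`, and flatter if it strictly prefers such a bundle to `c`.
The intermediate value theorem and the closedness of contour sets show that this does not depend
on the bundle chosen on the curve and is locally constant in `c`; the interior of `Z` is
connected, so it is the same at every interior bundle.
-/

open Set Filter Topology

theorem IsPreconnected.exists_and_of_forall_or {X : Type*} [TopologicalSpace X] {s : Set X}
    (hs : IsPreconnected s) {P Q : X → Prop} (hPQ : ∀ x ∈ s, P x ∨ Q x)
    (hP : ∀ x ∈ s, P x → ∀ᶠ y in 𝓝[s] x, P y) (hQ : ∀ x ∈ s, Q x → ∀ᶠ y in 𝓝[s] x, Q y)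
    {x y : X} (hx : x ∈ s) (hy : y ∈ s) (hPx : P x) (hQy : Q y) : ∃ z ∈ s, P z ∧ Q z := by
  by_contra! h
  have hiff : P x ↔ P y := by
    refine hs.induction₂ (fun a b => P a ↔ P b) (fun a ha => ?_)
      (fun _ _ _ _ _ _ => Iff.trans) (fun _ _ _ _ => Iff.symm) hx hy
    rcases hPQ a ha with hPa | hQa
    · filter_upwards [hP a ha hPa] with b hPb using iff_of_true hPa hPb
    · filter_upwards [hQ a ha hQa, self_mem_nhdsWithin] with b hQb hb
      exact iff_of_false (fun hPa => h a ha hPa hQa) (fun hPb => h b hb hPb hQb)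
  exact h y hy (hiff.1 hPx) hQy

theorem bLt.ne {x y : ℝ × ℝ} (h : bLt x y) : x ≠ y := by
  rintro rfl
  exact lt_irrefl _ h.1

namespace ClassicalPref

variable (A : ClassicalPref)

theorem refl {x : ℝ × ℝ} (hx : inZ x) : A.R x x :=
  (A.total x x hx hx).elim id id

theorem trans {x y z : ℝ × ℝ} (hxy : A.R x y) (hyz : A.R y z) : A.R x z :=
  A.transitive x y z hxy hyz

theorem R_of_not_R {x y : ℝ × ℝ} (hx : inZ x) (hy : inZ y) (h : ¬ A.R x y) : A.R y x :=
  (A.total x y hx hy).resolve_left h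

theorem R_of_le_of_le {u v : ℝ × ℝ} (hu : inZ u) (hv : inZ v) (h1 : v.1 ≤ u.1)
    (h2 : u.2 ≤ v.2) : A.R v u := by
  obtain ⟨u1, u2⟩ := u
  obtain ⟨v1, v2⟩ := v
  dsimp only at h1 h2
  have hq : A.R (v1, v2) (v1, u2) := by
    rcases h2.eq_or_lt with h | h
    · rw [h]; exact A.refl hv
    · exact (A.q_mono v1 u2 v2 hv.1 hu.2.1 h hv.2.2).1
  have ht : A.R (v1, u2) (u1, u2) := by
    rcases h1.eq_or_lt with h | h
    · rw [← h]; exact A.refl ⟨hv.1, hu.2⟩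
    · exact (A.money_mono v1 u1 u2 hv.1 h hu.2.1 hu.2.2).1
  exact A.trans hq ht

theorem not_R_of_le_of_le {u v : ℝ × ℝ} (hu : inZ u) (hv : inZ v) (h1 : v.1 ≤ u.1)
    (h2 : u.2 ≤ v.2) (hne : v.1 < u.1 ∨ u.2 < v.2) : ¬ A.R u v := by
  obtain ⟨u1, u2⟩ := u
  obtain ⟨v1, v2⟩ := v
  dsimp only at h1 h2 hne
  intro h
  rcases hne with hlt | hlt
  · exact (A.money_mono v1 u1 u2 hv.1 hlt hu.2.1 hu.2.2).2
      (A.trans h (A.R_of_le_of_le ⟨hv.1, hu.2⟩ hv le_rfl h2))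
  · exact (A.q_mono u1 u2 v2 hu.1 hu.2.1 hlt hv.2.2).2
      (A.trans h (A.R_of_le_of_le ⟨hu.1, hv.2⟩ hv h1 le_rfl))

theorem fst_eq_of_indiff {t t' q : ℝ} {c : ℝ × ℝ} (h : inZ (t, q)) (h' : inZ (t', q))
    (hI : Indiff A (t, q) c) (hI' : Indiff A (t', q) c) : t = t' := by
  by_contra hne
  rcases lt_or_gt_of_ne hne with hlt | hlt
  · exact (A.money_mono t t' q h.1 hlt h.2.1 h.2.2).2 (A.trans hI'.1 hI.2)
  · exact (A.money_mono t' t q h'.1 hlt h.2.1 h.2.2).2 (A.trans hI.1 hI'.2)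

theorem eventually_not_R_left {c v : ℝ × ℝ} (h : ¬ A.R c v) :
    ∀ᶠ w in 𝓝 c, inZ w → ¬ A.R w v := by
  filter_upwards [(A.continuous v).1.isOpen_compl.mem_nhds fun hc => h hc.2] with w hw hwZ hwv
  exact hw ⟨hwZ, hwv⟩

theorem eventually_not_R_right {c v : ℝ × ℝ} (h : ¬ A.R v c) :
    ∀ᶠ w in 𝓝 c, inZ w → ¬ A.R v w := by
  filter_upwards [(A.continuous v).2.isOpen_compl.mem_nhds fun hc => h hc.2] with w hw hwZ hvw
  exact hw ⟨hwZ, hvw⟩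

theorem R_of_eventually_R_shift {v z : ℝ × ℝ} (hv : inZ v)
    (h : ∀ᶠ r in 𝓝[>] (0 : ℝ), A.R z (v.1 + r, v.2)) : A.R z v := by
  have hlim : Tendsto (fun r : ℝ => (v.1 + r, v.2)) (𝓝[>] 0) (𝓝 v) :=
    (Continuous.tendsto' (by fun_prop) 0 v (by simp)).mono_left nhdsWithin_le_nhds
  refine ((A.continuous z).2.mem_of_tendsto hlim ?_).2
  filter_upwards [h, self_mem_nhdsWithin] with r hr (hr0 : 0 < r)
  exact ⟨⟨by linarith [hv.1], hv.2⟩, hr⟩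

theorem exists_indiff_of_path {c : ℝ × ℝ} (hc : inZ c) {γ : ℝ → ℝ × ℝ} (hγ : Continuous γ)
    (hZ : ∀ s ∈ Icc (0 : ℝ) 1, inZ (γ s)) (h0 : A.R (γ 0) c) (h1 : A.R c (γ 1)) :
    ∃ s ∈ Icc (0 : ℝ) 1, Indiff A (γ s) c := by
  obtain ⟨s, hs, ⟨-, hA1⟩, ⟨-, hA2⟩⟩ := isPreconnected_closed_iff.1 isPreconnected_Icc
    (γ ⁻¹' {w | inZ w ∧ A.R w c}) (γ ⁻¹' {w | inZ w ∧ A.R c w})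
    ((A.continuous c).1.preimage hγ) ((A.continuous c).2.preimage hγ)
    (fun s hs => (A.total _ c (hZ s hs) hc).imp (⟨hZ s hs, ·⟩) (⟨hZ s hs, ·⟩))
    ⟨0, left_mem_Icc.2 zero_le_one, hZ 0 (left_mem_Icc.2 zero_le_one), h0⟩
    ⟨1, right_mem_Icc.2 zero_le_one, hZ 1 (right_mem_Icc.2 zero_le_one), h1⟩
  exact ⟨s, hs, hA1, hA2⟩

theorem exists_indiff_fst {c : ℝ × ℝ} (hc : inZ c) {t₀ t₁ q : ℝ} (ht : t₀ ≤ t₁) (ht₀ : 0 ≤ t₀)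
    (hq₀ : 0 ≤ q) (hq₁ : q ≤ 1) (h₀ : A.R (t₀, q) c) (h₁ : A.R c (t₁, q)) :
    ∃ t, t₀ ≤ t ∧ t ≤ t₁ ∧ Indiff A (t, q) c := by
  obtain ⟨s, hs, hI⟩ := A.exists_indiff_of_path hc (γ := fun s => (t₀ + s * (t₁ - t₀), q))
    (by fun_prop) (fun s hs => ⟨by nlinarith [hs.1, hs.2], hq₀, hq₁⟩) (by simpa using h₀)
    (by simpa using h₁)
  exact ⟨_, by nlinarith [hs.1, hs.2], by nlinarith [hs.1, hs.2], hI⟩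

theorem exists_indiff_snd {c : ℝ × ℝ} (hc : inZ c) {t q₀ q₁ : ℝ} (hq : q₀ ≤ q₁) (ht : 0 ≤ t)
    (hq₀ : 0 ≤ q₀) (hq₁ : q₁ ≤ 1) (h₀ : A.R c (t, q₀)) (h₁ : A.R (t, q₁) c) :
    ∃ q, q₀ ≤ q ∧ q ≤ q₁ ∧ Indiff A (t, q) c := by
  obtain ⟨s, hs, hI⟩ := A.exists_indiff_of_path hc (γ := fun s => (t, q₁ + s * (q₀ - q₁)))
    (by fun_prop) (fun s hs => ⟨ht, by nlinarith [hs.1, hs.2], by nlinarith [hs.1, hs.2]⟩)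
    (by simpa using h₁) (by simpa using h₀)
  exact ⟨_, by nlinarith [hs.1, hs.2], by nlinarith [hs.1, hs.2], hI⟩

theorem exists_indiff_lt {c : ℝ × ℝ} (hc : inZ c) (hc1 : 0 < c.1) (hc2 : 0 < c.2) :
    ∃ a, inZ a ∧ 0 < a.1 ∧ bLt a c ∧ Indiff A a c := by
  have hv : ¬ A.R c (c.1 / 2, c.2) := A.not_R_of_le_of_le hc ⟨by positivity, hc.2⟩
    (by linarith) le_rfl (Or.inl (by linarith))
  have hlim : Tendsto (fun δ : ℝ => (c.1 / 2, c.2 - δ)) (𝓝[>] 0) (𝓝 (c.1 / 2, c.2)) :=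
    (Continuous.tendsto' (by fun_prop) 0 _ (by simp)).mono_left nhdsWithin_le_nhds
  obtain ⟨δ, hδA, hδ⟩ :=
    ((hlim.eventually (A.eventually_not_R_right hv)).and (Ioo_mem_nhdsGT hc2)).exists
  have hl : inZ (c.1 / 2, c.2 - δ) :=
    ⟨by positivity, by linarith [hδ.2], by linarith [hc.2.2, hδ.1]⟩
  have hr : inZ (c.1, c.2 - δ) := ⟨hc.1, hl.2⟩
  have hcr : ¬ A.R (c.1, c.2 - δ) c :=
    A.not_R_of_le_of_le hr hc le_rfl (by linarith [hδ.1]) (Or.inr (by linarith [hδ.1]))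
  obtain ⟨t, ht₀, ht₁, hI⟩ := A.exists_indiff_fst hc (by linarith) (by positivity) hl.2.1 hl.2.2
    (A.R_of_not_R hc hl (hδA hl)) (A.R_of_not_R hr hc hcr)
  exact ⟨(t, c.2 - δ), ⟨by linarith, hl.2⟩, by simp only; linarith,
    ⟨lt_of_le_of_ne ht₁ fun h => hcr (h ▸ hI.1), by simp only; linarith [hδ.1]⟩, hI⟩

theorem eventually_dist_lt_of_indiff {c : ℝ × ℝ} {t₀ θ₀ η : ℝ} (h₀ : inZ (t₀, θ₀))
    (hI₀ : Indiff A (t₀, θ₀) c) (hη : 0 < η) :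
    ∀ᶠ θ in 𝓝 θ₀, ∀ t, inZ (t, θ) → Indiff A (t, θ) c → dist t t₀ < η := by
  have hpath (s : ℝ) : Tendsto (fun θ : ℝ => (s, θ)) (𝓝 θ₀) (𝓝 (s, θ₀)) :=
    (continuous_const.prodMk continuous_id).tendsto θ₀
  have hup : ∀ᶠ θ in 𝓝 θ₀, ∀ t, inZ (t, θ) → Indiff A (t, θ) c → t < t₀ + η := by
    have h : ¬ A.R (t₀ + η, θ₀) c := fun h =>
      (A.money_mono t₀ (t₀ + η) θ₀ h₀.1 (by linarith) h₀.2.1 h₀.2.2).2 (A.trans h hI₀.2)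
    filter_upwards [(hpath _).eventually (A.eventually_not_R_left h)] with θ hθ t ht hI
    by_contra! hle
    have hv : inZ (t₀ + η, θ) := ⟨by linarith [h₀.1], ht.2⟩
    exact hθ hv (A.trans (A.R_of_le_of_le ht hv hle le_rfl) hI.1)
  have hlow : ∀ᶠ θ in 𝓝 θ₀, ∀ t, inZ (t, θ) → Indiff A (t, θ) c → t₀ - η < t := by
    rcases lt_or_ge t₀ η with hsmall | hle
    · exact Eventually.of_forall fun θ t ht _ => by linarith [ht.1]
    have h : ¬ A.R c (t₀ - η, θ₀) := fun h =>
      (A.money_mono (t₀ - η) t₀ θ₀ (by linarith) (by linarith) h₀.2.1 h₀.2.2).2 (A.trans hI₀.1 h)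
    filter_upwards [(hpath _).eventually (A.eventually_not_R_right h)] with θ hθ t ht hI
    by_contra! hle'
    have hv : inZ (t₀ - η, θ) := ⟨by linarith, ht.2⟩
    exact hθ hv (A.trans hI.2 (A.R_of_le_of_le hv ht hle' le_rfl))
  filter_upwards [hup, hlow] with θ hup hlow t ht hI
  rw [Real.dist_eq, abs_sub_lt_iff]
  constructor <;> linarith [hup t ht hI, hlow t ht hI]

theorem exists_indiff_of_mem_uIcc {c p p' : ℝ × ℝ} (hc : inZ c) (hp : inZ p) (hp' : inZ p')
    (hpI : Indiff A p c) (hp'I : Indiff A p' c) {θ : ℝ} (hθ : θ ∈ uIcc p.2 p'.2) :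
    ∃ t, inZ (t, θ) ∧ Indiff A (t, θ) c := by
  wlog h : p.2 ≤ p'.2 generalizing p p'
  · exact this hp' hp hp'I hpI (uIcc_comm p.2 p'.2 ▸ hθ) (le_of_not_ge h)
  rw [uIcc_of_le h] at hθ
  have hθZ (s : ℝ) (hs : 0 ≤ s) : inZ (s, θ) := ⟨hs, hp.2.1.trans hθ.1, hθ.2.trans hp'.2.2⟩
  have h1 : p.1 ≤ p'.1 := by
    by_contra! hlt
    exact A.not_R_of_le_of_le hp hp' hlt.le h (Or.inl hlt) (A.trans hpI.1 hp'I.2)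
  obtain ⟨t, ht, -, hI⟩ := A.exists_indiff_fst hc h1 hp.1 (hθZ _ hp.1).2.1 (hθZ _ hp.1).2.2
    (A.trans (A.R_of_le_of_le hp (hθZ _ hp.1) le_rfl hθ.1) hpI.1)
    (A.trans hp'I.2 (A.R_of_le_of_le (hθZ _ hp'.1) hp' le_rfl hθ.2))
  exact ⟨t, hθZ t (hp.1.trans ht), hI⟩

theorem eventually_exists_indiff {c : ℝ × ℝ} {s : Set ℝ}
    (hs : ∀ θ ∈ s, ∃ t, inZ (t, θ) ∧ Indiff A (t, θ) c) {S : ℝ × ℝ → Prop} {t₀ θ₀ : ℝ}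
    (h₀ : inZ (t₀, θ₀)) (hI₀ : Indiff A (t₀, θ₀) c) (hS : ∀ᶠ w in 𝓝 (t₀, θ₀), inZ w → S w) :
    ∀ᶠ θ in 𝓝[s] θ₀, ∃ t, inZ (t, θ) ∧ Indiff A (t, θ) c ∧ S (t, θ) := by
  rw [nhds_prod_eq] at hS
  obtain ⟨pt, hpt, pθ, hpθ, hS⟩ := eventually_prod_iff.1 hS
  obtain ⟨η, hη, hball⟩ := Metric.eventually_nhds_iff.1 hpt
  rw [eventually_nhdsWithin_iff]
  filter_upwards [hpθ, A.eventually_dist_lt_of_indiff h₀ hI₀ hη] with θ hθ hclose hθs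
  obtain ⟨t, ht, hI⟩ := hs θ hθs
  exact ⟨t, ht, hI, hS (hball (hclose t ht hI)) hθ ht⟩

theorem eventually_exists_indiff_shift {a c : ℝ × ℝ} (ha : inZ a) (hI : Indiff A a c) {η : ℝ}
    (hη : 0 < η) (hηa : η ≤ a.1) (hac : bLt (a.1 + η, a.2) c) :
    ∀ᶠ c' in 𝓝 c, inZ c' →
      ∃ t ∈ Icc (a.1 - η) (a.1 + η), bLt (t, a.2) c' ∧ Indiff A (t, a.2) c' := by
  have hm : inZ (a.1 - η, a.2) := ⟨by linarith, ha.2⟩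
  have hp : inZ (a.1 + η, a.2) := ⟨by linarith [ha.1], ha.2⟩
  have hl : ¬ A.R c (a.1 - η, a.2) := fun h => A.not_R_of_le_of_le ha hm (by simp only; linarith)
    le_rfl (Or.inl (by simp only; linarith)) (A.trans hI.1 h)
  have hr : ¬ A.R (a.1 + η, a.2) c := fun h => A.not_R_of_le_of_le hp ha (by simp only; linarith)
    le_rfl (Or.inl (by simp only; linarith)) (A.trans h hI.2)
  filter_upwards [A.eventually_not_R_left hl, A.eventually_not_R_right hr,
    (continuous_fst.tendsto c).eventually (lt_mem_nhds hac.1),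
    (continuous_snd.tendsto c).eventually (lt_mem_nhds hac.2)] with c' hl' hr' h1 h2 hc'
  obtain ⟨t, ht₁, ht₂, hIt⟩ := A.exists_indiff_fst hc' (by linarith) hm.1 ha.2.1 ha.2.2
    (A.R_of_not_R hc' hm (hl' hc')) (A.R_of_not_R hp hc' (hr' hc'))
  exact ⟨t, ⟨ht₁, ht₂⟩, ⟨by linarith, h2⟩, hIt⟩

end ClassicalPref

def SteeperAt (A B : ClassicalPref) (c : ℝ × ℝ) : Prop :=
  ∃ a, inZ a ∧ bLt a c ∧ Indiff A a c ∧ ¬ B.R a c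

def FlatterAt (A B : ClassicalPref) (c : ℝ × ℝ) : Prop :=
  ∃ a, inZ a ∧ bLt a c ∧ Indiff A a c ∧ ¬ B.R c a

section SingleCrossing

variable {A B : ClassicalPref}

theorem steeperAt_of_R_of_not_R {e f : ℝ × ℝ} (he : inZ e) (hf : inZ f) (hef : bLt e f)
    (hA : A.R e f) (hB : ¬ B.R e f) : SteeperAt A B f := by
  have hq : inZ (f.1, e.2) := ⟨hf.1, he.2⟩
  have hqf : ¬ A.R (f.1, e.2) f := A.not_R_of_le_of_le hq hf le_rfl hef.2.le (Or.inr hef.2)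
  obtain ⟨t, het, htf, hI⟩ :=
    A.exists_indiff_fst hf hef.1.le he.1 he.2.1 he.2.2 hA (A.R_of_not_R hq hf hqf)
  have hp : inZ (t, e.2) := ⟨he.1.trans het, he.2⟩
  exact ⟨(t, e.2), hp, ⟨lt_of_le_of_ne htf fun h => hqf (h ▸ hI.1), hef.2⟩, hI,
    fun h => hB (B.trans (B.R_of_le_of_le hp he het le_rfl) h)⟩

theorem flatterAt_of_R_of_not_R {w z : ℝ × ℝ} (hw : inZ w) (hz : inZ z) (hwz : bLt w z)
    (hB : B.R w z) (hA : ¬ A.R w z) : FlatterAt A B z := by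
  have hq : inZ (z.1, w.2) := ⟨hz.1, hw.2⟩
  have hqz : ¬ B.R (z.1, w.2) z := B.not_R_of_le_of_le hq hz le_rfl hwz.2.le (Or.inr hwz.2)
  obtain ⟨s, hws, hsz, hIB⟩ :=
    B.exists_indiff_fst hz hwz.1.le hw.1 hw.2.1 hw.2.2 hB (B.R_of_not_R hq hz hqz)
  have hsz' : s < z.1 := lt_of_le_of_ne hsz fun h => hqz (h ▸ hIB.1)
  have hv : inZ (s, w.2) := ⟨hw.1.trans hws, hw.2⟩
  have hAv : ¬ A.R (s, w.2) z := fun h => hA (A.trans (A.R_of_le_of_le hv hw hws le_rfl) h)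
  have hr : inZ (s, z.2) := ⟨hv.1, hz.2⟩
  have hzr : ¬ A.R z (s, z.2) := A.not_R_of_le_of_le hz hr hsz'.le le_rfl (Or.inl hsz')
  obtain ⟨θ, hwθ, hθz, hIA⟩ := A.exists_indiff_snd hz hwz.2.le hv.1 hw.2.1 hz.2.2
    (A.R_of_not_R hv hz hAv) (A.R_of_not_R hz hr hzr)
  have hwθ' : w.2 < θ := lt_of_le_of_ne hwθ fun h => hAv (h ▸ hIA.1)
  have hu : inZ (s, θ) := ⟨hv.1, hw.2.1.trans hwθ, hθz.trans hz.2.2⟩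
  exact ⟨(s, θ), hu, ⟨hsz', lt_of_le_of_ne hθz fun h => hzr (h ▸ hIA.2)⟩, hIA,
    fun h => (B.q_mono s w.2 θ hv.1 hw.2.1 hwθ' hu.2.2).2 (B.trans hIB.1 h)⟩

theorem SingleCrossing.eq_of_indiff (hsc : SingleCrossing A B) {c d : ℝ × ℝ} (hc : inZ c)
    (hd : inZ d) (hA : Indiff A c d) (hB : Indiff B c d) : c = d :=
  (hsc d d c hd hd hc hA hB d hd ⟨A.refl hd, A.refl hd⟩ ⟨B.refl hd, B.refl hd⟩).symm

theorem SingleCrossing.R_of_not_R_of_indiff (hsc : SingleCrossing A B) {c a a' : ℝ × ℝ}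
    (hc : inZ c) (ha : inZ a) (ha' : inZ a') (haI : Indiff A a c) (ha'I : Indiff A a' c)
    (ha2 : a.2 < c.2) (ha'2 : a'.2 < c.2) (h : ¬ B.R a c) : B.R c a' := by
  by_contra h'
  have hcurve (θ : ℝ) (hθ : θ ∈ uIcc a.2 a'.2) : ∃ t, inZ (t, θ) ∧ Indiff A (t, θ) c :=
    A.exists_indiff_of_mem_uIcc hc ha ha' haI ha'I hθ
  have hcover (θ : ℝ) (hθ : θ ∈ uIcc a.2 a'.2) :
      (∃ t, inZ (t, θ) ∧ Indiff A (t, θ) c ∧ ¬ B.R (t, θ) c) ∨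
        (∃ t, inZ (t, θ) ∧ Indiff A (t, θ) c ∧ ¬ B.R c (t, θ)) := by
    obtain ⟨t, ht, hI⟩ := hcurve θ hθ
    have hne : (t, θ) ≠ c := fun h => (hθ.2.trans_lt (max_lt ha2 ha'2)).ne (congrArg Prod.snd h)
    by_cases hB : B.R (t, θ) c
    · exact Or.inr ⟨t, ht, hI, fun hB' => hne (hsc.eq_of_indiff ht hc hI ⟨hB, hB'⟩)⟩
    · exact Or.inl ⟨t, ht, hI, hB⟩
  obtain ⟨θ, -, ⟨t, ht, hI, hB⟩, ⟨t', ht', hI', hB'⟩⟩ :=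
    isPreconnected_uIcc.exists_and_of_forall_or hcover
      (fun _ _ ⟨_, h₀, hI₀, hB₀⟩ =>
        A.eventually_exists_indiff hcurve h₀ hI₀ (B.eventually_not_R_left hB₀))
      (fun _ _ ⟨_, h₀, hI₀, hB₀⟩ =>
        A.eventually_exists_indiff hcurve h₀ hI₀ (B.eventually_not_R_right hB₀))
      left_mem_uIcc right_mem_uIcc ⟨a.1, ha, haI, h⟩ ⟨a'.1, ha', ha'I, h'⟩
  obtain rfl := A.fst_eq_of_indiff ht ht' hI hI'
  exact hB (B.R_of_not_R hc ht hB')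

theorem SingleCrossing.steeperAt_or_flatterAt (hsc : SingleCrossing A B) {c : ℝ × ℝ}
    (hc : inZ c) (hc1 : 0 < c.1) (hc2 : 0 < c.2) : SteeperAt A B c ∨ FlatterAt A B c := by
  obtain ⟨a, ha, -, hac, haI⟩ := A.exists_indiff_lt hc hc1 hc2
  by_cases hB : B.R a c
  · exact Or.inr ⟨a, ha, hac, haI, fun hB' => hac.ne (hsc.eq_of_indiff ha hc haI ⟨hB, hB'⟩)⟩
  · exact Or.inl ⟨a, ha, hac, haI, hB⟩

theorem SingleCrossing.eventually_steeperAt (hsc : SingleCrossing A B) {c : ℝ × ℝ} (hc : inZ c)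
    (h : SteeperAt A B c) : ∀ᶠ c' in 𝓝 c, inZ c' → SteeperAt A B c' := by
  obtain ⟨a₀, ha₀, ha₀c, ha₀I, hB₀⟩ := h
  obtain ⟨a, ha, ha1, hac, haI⟩ := A.exists_indiff_lt hc (ha₀.1.trans_lt ha₀c.1)
    (ha₀.2.1.trans_lt ha₀c.2)
  have hB : ¬ B.R a c := fun hB => hac.ne (hsc.eq_of_indiff ha hc haI
    ⟨hB, hsc.R_of_not_R_of_indiff hc ha₀ ha ha₀I haI ha₀c.2 hac.2 hB₀⟩)
  have hlim : Tendsto (fun η : ℝ => (a.1 - η, a.2)) (𝓝[>] 0) (𝓝 a) :=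
    (Continuous.tendsto' (by fun_prop) 0 _ (by simp)).mono_left nhdsWithin_le_nhds
  obtain ⟨η, hBη, hηa, hηc⟩ := ((hlim.eventually (B.eventually_not_R_left hB)).and
    (inter_mem (Ioo_mem_nhdsGT ha1) (Ioo_mem_nhdsGT (sub_pos.2 hac.1)))).exists
  have hm : inZ (a.1 - η, a.2) := ⟨by linarith [hηa.2], ha.2⟩
  filter_upwards [A.eventually_exists_indiff_shift ha haI hηa.1 hηa.2.le
      ⟨by simp only; linarith [hηc.2], hac.2⟩, B.eventually_not_R_right (hBη hm)]
    with c' hc' hBc' hc'Z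
  obtain ⟨t, ht, htc, hIt⟩ := hc' hc'Z
  have htZ : inZ (t, a.2) := ⟨hm.1.trans ht.1, ha.2⟩
  exact ⟨(t, a.2), htZ, htc, hIt,
    fun hBt => hBc' hc'Z (B.trans (B.R_of_le_of_le htZ hm ht.1 le_rfl) hBt)⟩

theorem SingleCrossing.eventually_flatterAt (hsc : SingleCrossing A B) {c : ℝ × ℝ} (hc : inZ c)
    (h : FlatterAt A B c) : ∀ᶠ c' in 𝓝 c, inZ c' → FlatterAt A B c' := by
  obtain ⟨a₀, ha₀, ha₀c, ha₀I, hB₀⟩ := h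
  obtain ⟨a, ha, ha1, hac, haI⟩ := A.exists_indiff_lt hc (ha₀.1.trans_lt ha₀c.1)
    (ha₀.2.1.trans_lt ha₀c.2)
  have hB : ¬ B.R c a := fun hB => hac.ne (hsc.eq_of_indiff ha hc haI
    ⟨by_contra fun hB' => hB₀ (hsc.R_of_not_R_of_indiff hc ha ha₀ haI ha₀I hac.2 ha₀c.2 hB'),
      hB⟩)
  have hlim : Tendsto (fun η : ℝ => (a.1 + η, a.2)) (𝓝[>] 0) (𝓝 a) :=
    (Continuous.tendsto' (by fun_prop) 0 _ (by simp)).mono_left nhdsWithin_le_nhds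
  obtain ⟨η, hBη, hηa, hηc⟩ := ((hlim.eventually (B.eventually_not_R_right hB)).and
    (inter_mem (Ioo_mem_nhdsGT ha1) (Ioo_mem_nhdsGT (sub_pos.2 hac.1)))).exists
  have hp : inZ (a.1 + η, a.2) := ⟨by linarith [ha.1, hηa.1], ha.2⟩
  filter_upwards [A.eventually_exists_indiff_shift ha haI hηa.1 hηa.2.le
      ⟨by simp only; linarith [hηc.2], hac.2⟩, B.eventually_not_R_left (hBη hp)]
    with c' hc' hBc' hc'Z
  obtain ⟨t, ht, htc, hIt⟩ := hc' hc'Z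
  have htZ : inZ (t, a.2) := ⟨by linarith [ht.1, hηa.2], ha.2⟩
  exact ⟨(t, a.2), htZ, htc, hIt,
    fun hBt => hBc' hc'Z (B.trans hBt (B.R_of_le_of_le hp htZ ht.2 le_rfl))⟩

theorem SingleCrossing.not_flatterAt_of_steeperAt (hsc : SingleCrossing A B) {f z : ℝ × ℝ}
    (hf : inZ f) (hz : inZ z) (hsf : SteeperAt A B f) : ¬ FlatterAt A B z := by
  intro hfz
  have hZ (c : ℝ × ℝ) (hc : c ∈ Ioi (0 : ℝ) ×ˢ Ioc (0 : ℝ) 1) : inZ c :=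
    ⟨hc.1.le, hc.2.1.le, hc.2.2⟩
  have hmem {c a : ℝ × ℝ} (hc : inZ c) (ha : inZ a) (hac : bLt a c) :
      c ∈ Ioi (0 : ℝ) ×ˢ Ioc (0 : ℝ) 1 :=
    ⟨ha.1.trans_lt hac.1, ha.2.1.trans_lt hac.2, hc.2.2⟩
  have ⟨p, hp, hpf, _⟩ := hsf
  have ⟨u, hu, huz, _⟩ := hfz
  obtain ⟨c, hc, ⟨a, ha, hac, haI, hB⟩, ⟨a', ha', ha'c, ha'I, hB'⟩⟩ :=
    (isPreconnected_Ioi.prod isPreconnected_Ioc).exists_and_of_forall_or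
      (fun c hc => hsc.steeperAt_or_flatterAt (hZ c hc) hc.1 hc.2.1)
      (fun c hc h => eventually_nhdsWithin_iff.2 <|
        (hsc.eventually_steeperAt (hZ c hc) h).mono fun c' h' hc' => h' (hZ c' hc'))
      (fun c hc h => eventually_nhdsWithin_iff.2 <|
        (hsc.eventually_flatterAt (hZ c hc) h).mono fun c' h' hc' => h' (hZ c' hc'))
      (hmem hf hp hpf) (hmem hz hu huz) hsf hfz
  exact hB' (hsc.R_of_not_R_of_indiff (hZ c hc) ha ha' haI ha'I hac.2 ha'c.2 hB)

theorem SingleCrossing.prec_of_R_of_not_R (hsc : SingleCrossing A B) {e f : ℝ × ℝ} (he : inZ e)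
    (hf : inZ f) (hef : bLt e f) (hA : A.R e f) (hB : ¬ B.R e f) : Prec A B := by
  intro z hz w hw hwz hBwz
  by_contra hAwz
  rcases hwz with rfl | hwz
  · exact hAwz (A.refl hz)
  exact hsc.not_flatterAt_of_steeperAt hf hz (steeperAt_of_R_of_not_R he hf hef hA hB)
    (flatterAt_of_R_of_not_R hw hz hwz hBwz hAwz)

theorem SingleCrossing.prec_of_indiff_of_R (hsc : SingleCrossing A B) {x y : ℝ × ℝ}
    (hx : inZ x) (hy : inZ y) (hxy : bLt x y) (hB : Indiff B x y) (hA : A.R x y) : Prec A B := by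
  have hq : inZ (y.1, x.2) := ⟨hy.1, hx.2⟩
  have hqy : ¬ A.R (y.1, x.2) y := A.not_R_of_le_of_le hq hy le_rfl hxy.2.le (Or.inr hxy.2)
  obtain ⟨t, hxt, hty, hI⟩ :=
    A.exists_indiff_fst hy hxy.1.le hx.1 hx.2.1 hx.2.2 hA (A.R_of_not_R hq hy hqy)
  have hp : inZ (t, x.2) := ⟨hx.1.trans hxt, hx.2⟩
  have hxt' : x.1 < t := lt_of_le_of_ne hxt fun h =>
    hxy.ne (hsc.eq_of_indiff hx hy (h ▸ hI : Indiff A (x.1, x.2) y) hB)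
  exact hsc.prec_of_R_of_not_R hp hy ⟨lt_of_le_of_ne hty fun h => hqy (h ▸ hI.1), hxy.2⟩ hI.1
    fun h => B.not_R_of_le_of_le hp hx hxt'.le le_rfl (Or.inl hxt') (B.trans h hB.2)

end SingleCrossing

theorem Prec.R_upper {X Y : ClassicalPref} (h : Prec X Y) {w z : ℝ × ℝ} (hw : inZ w)
    (hz : inZ z) (hwz : bLt w z) (hX : X.R z w) : Y.R z w := by
  refine Y.R_of_eventually_R_shift hw ?_
  filter_upwards [Ioo_mem_nhdsGT (sub_pos.2 hwz.1)] with r hr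
  have hv : inZ (w.1 + r, w.2) := ⟨by linarith [hw.1, hr.1], hw.2⟩
  refine Y.R_of_not_R hv hz fun hY => ?_
  have hX' : X.R (w.1 + r, w.2) z :=
    h z hz _ hv (Or.inr ⟨by simp only; linarith [hr.2], hwz.2⟩) hY
  exact X.not_R_of_le_of_le hv hw (by simp only; linarith [hr.1]) le_rfl
    (Or.inl (by simp only; linarith [hr.1])) (X.trans hX' hX)

theorem precSim_of_R_of_R {D : Set ClassicalPref} (hD : D.Pairwise SingleCrossing)
    {X Y : ClassicalPref} (hX : X ∈ D) (hY : Y ∈ D) {e f : ℝ × ℝ} (he : inZ e) (hf : inZ f)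
    (hef : bLt e f) (hXef : X.R e f) (hYfe : Y.R f e) : PrecSim X Y := by
  by_cases hXY : X = Y
  · exact Or.inl hXY
  by_cases hYef : Y.R e f
  · exact Or.inr ((hD hX hY hXY).prec_of_indiff_of_R he hf hef ⟨hYef, hYfe⟩ hXef)
  · exact Or.inr ((hD hX hY hXY).prec_of_R_of_not_R he hf hef hXef hYef)

theorem eq_of_precSim_of_R_of_R {D : Set ClassicalPref} (hD : D.Pairwise SingleCrossing)
    {X Y : ClassicalPref} (hX : X ∈ D) (hY : Y ∈ D) (hXY : PrecSim X Y) {a b : ℝ × ℝ}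
    (ha : inZ a) (hb : inZ b) (hab : bLt a b) (hXba : X.R b a) (hYab : Y.R a b) : X = Y := by
  rcases hXY with rfl | hXY
  · rfl
  by_contra hne
  exact hab.ne ((hD hX hY hne).eq_of_indiff ha hb ⟨hXY b hb a ha (Or.inr hab) hYab, hXba⟩
    ⟨hYab, hXY.R_upper ha hb hab hXba⟩)

theorem bLt_or_bLt_of_R_of_R {X Y : ClassicalPref} {a b : ℝ × ℝ} (ha : inZ a) (hb : inZ b)
    (hne : a ≠ b) (h1 : X.R a b) (h2 : Y.R b a) : bLt b a ∨ bLt a b := by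
  rcases lt_trichotomy a.1 b.1 with hc1 | hc1 | hc1 <;>
    rcases lt_trichotomy a.2 b.2 with hc2 | hc2 | hc2
  · exact Or.inr ⟨hc1, hc2⟩
  · exact absurd h2 (Y.not_R_of_le_of_le hb ha hc1.le hc2.ge (Or.inl hc1))
  · exact absurd h2 (Y.not_R_of_le_of_le hb ha hc1.le hc2.le (Or.inl hc1))
  · exact absurd h1 (X.not_R_of_le_of_le ha hb hc1.ge hc2.le (Or.inr hc2))
  · exact absurd (Prod.ext hc1 hc2) hne
  · exact absurd h2 (Y.not_R_of_le_of_le hb ha hc1.le hc2.le (Or.inr hc2))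
  · exact absurd h1 (X.not_R_of_le_of_le ha hb hc1.le hc2.le (Or.inl hc1))
  · exact absurd h1 (X.not_R_of_le_of_le ha hb hc1.le hc2.le (Or.inl hc1))
  · exact Or.inl ⟨hc1, hc2⟩

theorem bLt.not_bLe {x y : ℝ × ℝ} (h : bLt x y) : ¬ bLe y x := by
  rintro (rfl | h')
  · exact lt_irrefl _ h.1
  · exact lt_asymm h.1 h'.1

theorem Filter.Tendsto.eventually_bLt_const {α : Type*} {l : Filter α} {u : α → ℝ × ℝ}
    {x y : ℝ × ℝ} (hu : Tendsto u l (𝓝 x)) (hxy : bLt x y) : ∀ᶠ n in l, bLt (u n) y :=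
  (((continuous_fst.tendsto x).comp hu).eventually_lt_const hxy.1).and
    (((continuous_snd.tendsto x).comp hu).eventually_lt_const hxy.2)

theorem Filter.Tendsto.eventually_const_bLt {α : Type*} {l : Filter α} {u : α → ℝ × ℝ}
    {x y : ℝ × ℝ} (hu : Tendsto u l (𝓝 x)) (hyx : bLt y x) : ∀ᶠ n in l, bLt y (u n) :=
  (((continuous_fst.tendsto x).comp hu).eventually_const_lt hyx.1).and
    (((continuous_snd.tendsto x).comp hu).eventually_const_lt hyx.2)

def StrategyProof (Dom : Set ClassicalPref) (F : ClassicalPref → ℝ × ℝ) : Prop :=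
  ∀ A ∈ Dom, ∀ B ∈ Dom, A.R (F A) (F B)

namespace StrategyProof

variable {D Dom : Set ClassicalPref} {F : ClassicalPref → ℝ × ℝ}

theorem precSim_of_bLt (hSP : StrategyProof Dom F) (hD : D.Pairwise SingleCrossing)
    (hDom : Dom ⊆ D) (hFZ : ∀ A ∈ Dom, inZ (F A)) {X Y : ClassicalPref} (hX : X ∈ Dom)
    (hY : Y ∈ Dom) (hXY : bLt (F X) (F Y)) : PrecSim X Y :=
  precSim_of_R_of_R hD (hDom hX) (hDom hY) (hFZ X hX) (hFZ Y hY) hXY (hSP X hX Y hY)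
    (hSP Y hY X hX)

theorem bLe_of_precSim (hSP : StrategyProof Dom F) (hD : D.Pairwise SingleCrossing)
    (hDom : Dom ⊆ D) (hFZ : ∀ A ∈ Dom, inZ (F A)) {X Y : ClassicalPref} (hX : X ∈ Dom)
    (hY : Y ∈ Dom) (hXY : PrecSim X Y) : bLe (F X) (F Y) := by
  by_cases heq : F X = F Y
  · exact Or.inl heq
  refine Or.inr <| (bLt_or_bLt_of_R_of_R (hFZ X hX) (hFZ Y hY) heq (hSP X hX Y hY)
    (hSP Y hY X hX)).resolve_left fun h => heq ?_
  rw [eq_of_precSim_of_R_of_R hD (hDom hX) (hDom hY) hXY (hFZ Y hY) (hFZ X hX) h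
    (hSP X hX Y hY) (hSP Y hY X hX)]

theorem not_bLt_of_upperBound (hSP : StrategyProof Dom F) (hD : D.Pairwise SingleCrossing)
    (hDom : Dom ⊆ D) (hFZ : ∀ A ∈ Dom, inZ (F A)) {R' Rs : ClassicalPref} (hRs : Rs ∈ Dom)
    (hlub : ∀ U ∈ Dom, (∀ A ∈ Dom, F A = F R' → PrecSim A U) → PrecSim Rs U)
    {Y : ClassicalPref} (hY : Y ∈ Dom) (hR'Y : bLt (F R') (F Y)) : ¬ bLt (F Y) (F Rs) :=
  fun hYRs => hYRs.not_bLe <| hSP.bLe_of_precSim hD hDom hFZ hRs hY <|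
    hlub Y hY fun _ hA hFA => hSP.precSim_of_bLt hD hDom hFZ hA hY (hFA ▸ hR'Y)

theorem not_bLt_of_lowerBound (hSP : StrategyProof Dom F) (hD : D.Pairwise SingleCrossing)
    (hDom : Dom ⊆ D) (hFZ : ∀ A ∈ Dom, inZ (F A)) {R' Rs : ClassicalPref} (hRs : Rs ∈ Dom)
    (hglb : ∀ L ∈ Dom, (∀ A ∈ Dom, F A = F R' → PrecSim L A) → PrecSim L Rs)
    {Y : ClassicalPref} (hY : Y ∈ Dom) (hYR' : bLt (F Y) (F R')) : ¬ bLt (F Rs) (F Y) :=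
  fun hRsY => hRsY.not_bLe <| hSP.bLe_of_precSim hD hDom hFZ hY hRs <|
    hglb Y hY fun _ hA hFA => hSP.precSim_of_bLt hD hDom hFZ hY hA (hFA ▸ hYR')

end StrategyProof

theorem sup_inf_at_limit_points_general
    (D : Set ClassicalPref) (hD : RichSC D)
    (Rlo Rhi : ClassicalPref)
    (Dom : Set ClassicalPref)
    (hDom : Dom = {A | A ∈ D ∧ PrecSim Rlo A ∧ PrecSim A Rhi})
    (F : ClassicalPref → ℝ × ℝ)
    (hFZ : ∀ A ∈ Dom, inZ (F A))
    (hSP : ∀ A ∈ Dom, ∀ B ∈ Dom, A.R (F A) (F B))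
    (R' : ClassicalPref) (hR' : R' ∈ Dom) :
    (∀ Rstar ∈ Dom,
      ((∀ A ∈ Dom, F A = F R' → PrecSim A Rstar) ∧
        (∀ U ∈ Dom, (∀ A ∈ Dom, F A = F R' → PrecSim A U) → PrecSim Rstar U)) →
      (∃ seq : ℕ → ClassicalPref, (∀ n, seq n ∈ Dom) ∧
        (∀ n, bLt (F R') (F (seq n)) ∧ bLt (F (seq (n + 1))) (F (seq n))) ∧
        Filter.Tendsto (fun n => F (seq n)) Filter.atTop (nhds (F R'))) →
      F Rstar = F R') ∧
    (∀ Rstarstar ∈ Dom,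
      ((∀ A ∈ Dom, F A = F R' → PrecSim Rstarstar A) ∧
        (∀ L ∈ Dom, (∀ A ∈ Dom, F A = F R' → PrecSim L A) → PrecSim L Rstarstar)) →
      (∃ seq : ℕ → ClassicalPref, (∀ n, seq n ∈ Dom) ∧
        (∀ n, bLt (F (seq n)) (F R') ∧ bLt (F (seq n)) (F (seq (n + 1)))) ∧
        Filter.Tendsto (fun n => F (seq n)) Filter.atTop (nhds (F R'))) →
      F Rstarstar = F R') := by
  have hSP : StrategyProof Dom F := hSP
  have hDomD : Dom ⊆ D := fun A hA => (hDom ▸ hA).1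
  constructor
  · rintro Rs hRs ⟨hub, hlub⟩ ⟨seq, hseq, hlt, hlim⟩
    rcases hSP.bLe_of_precSim hD.1 hDomD hFZ hR' hRs (hub R' hR' rfl) with heq | hR'Rs
    · exact heq.symm
    obtain ⟨n, hn⟩ := (hlim.eventually_bLt_const hR'Rs).exists
    exact absurd hn (hSP.not_bLt_of_upperBound hD.1 hDomD hFZ hRs hlub (hseq n) (hlt n).1)
  · rintro Rs hRs ⟨hlb, hglb⟩ ⟨seq, hseq, hlt, hlim⟩
    rcases hSP.bLe_of_precSim hD.1 hDomD hFZ hRs hR' (hlb R' hR' rfl) with heq | hRsR'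
    · exact heq
    obtain ⟨n, hn⟩ := (hlim.eventually_const_bLt hRsR').exists
    exact absurd hn (hSP.not_bLt_of_lowerBound hD.1 hDomD hFZ hRs hglb (hseq n) (hlt n).1)

/-- Supremum/infimum at limit points of the range. Let F be a
strategy-proof, individually rational mechanism on an interval [R̲,R̄] of a rich
single-crossing domain and let R' be in the interval. If R* is the supremum (for
≺) of {R : F(R)=F(R')} and there is a sequence of range bundles strictly
decreasing to F(R') from above, then F(R*)=F(R'); symmetrically, if R** is the
infimum and there is a sequence of range bundles strictly increasing to F(R')
from below, then F(R**)=F(R'). -/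
theorem sup_inf_at_limit_points
    (D : Set ClassicalPref) (hD : RichSC D)
    (Rlo Rhi : ClassicalPref) (hlo : Rlo ∈ D) (hhi : Rhi ∈ D)
    (Dom : Set ClassicalPref)
    (hDom : Dom = {A | A ∈ D ∧ PrecSim Rlo A ∧ PrecSim A Rhi})
    (F : ClassicalPref → ℝ × ℝ)
    (hFZ : ∀ A ∈ Dom, inZ (F A))
    (hSP : ∀ A ∈ Dom, ∀ B ∈ Dom, A.R (F A) (F B))
    (hIR : ∀ A ∈ Dom, A.R (F A) (0, 0))
    (R' : ClassicalPref) (hR' : R' ∈ Dom) :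
    (∀ Rstar ∈ Dom,
      ((∀ A ∈ Dom, F A = F R' → PrecSim A Rstar) ∧
        (∀ U ∈ Dom, (∀ A ∈ Dom, F A = F R' → PrecSim A U) → PrecSim Rstar U)) →
      (∃ seq : ℕ → ClassicalPref, (∀ n, seq n ∈ Dom) ∧
        (∀ n, bLt (F R') (F (seq n)) ∧ bLt (F (seq (n + 1))) (F (seq n))) ∧
        Filter.Tendsto (fun n => F (seq n)) Filter.atTop (nhds (F R'))) →
      F Rstar = F R') ∧
    (∀ Rstarstar ∈ Dom,
      ((∀ A ∈ Dom, F A = F R' → PrecSim Rstarstar A) ∧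
        (∀ L ∈ Dom, (∀ A ∈ Dom, F A = F R' → PrecSim L A) → PrecSim L Rstarstar)) →
      (∃ seq : ℕ → ClassicalPref, (∀ n, seq n ∈ Dom) ∧
        (∀ n, bLt (F (seq n)) (F R') ∧ bLt (F (seq n)) (F (seq (n + 1)))) ∧
        Filter.Tendsto (fun n => F (seq n)) Filter.atTop (nhds (F R'))) →
      F Rstarstar = F R') :=
  sup_inf_at_limit_points_general D hD Rlo Rhi Dom hDom F hFZ hSP R' hR'
end
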